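/- Let μ ≥ 0, M > 0 and f ∈ H^1(ℝ) with ‖f‖_{H^1} ≤ M, and let V ∈ L^1(ℝ, (1+|x|)dx). Then for every ε ∈ (0,1] and every y₀ ∈ ℝ, |∫_ℝ V(x) |f(y₀+εx)|^{2μ+2} dx − (∫_ℝ V dx) |f(y₀)|^{2μ+2}| ≤ c √ε, where c depends only on μ, M and ∫ √|x| |V(x)| dx. -/

import Mathlib

open MeasureTheory

noncomputable def L2norm (f : ℝ → ℂ) : ℝ := (eLpNorm f 2 volume).toReal

noncomputable def H1norm (f g : ℝ → ℂ) : ℝ := Real.sqrt (L2norm f ^ 2 + L2norm g ^ 2)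

/-- `f` is (the continuous representative of) an `H¹(ℝ)` function with weak
derivative `g`: both are in `L²` and `f` is the integral of `g`. -/
def IsH1 (f g : ℝ → ℂ) : Prop :=
  MemLp f 2 volume ∧ MemLp g 2 volume ∧ ∀ x y : ℝ, f y - f x = ∫ t in x..y, g t

/-- The free Schrödinger kernel `U(t,x) = (4πit)^{-1/2} e^{ix²/(4t)}`. -/
noncomputable def freeK (t x : ℝ) : ℂ :=
  (4 * Real.pi * Complex.I * t) ^ (-(1/2 : ℂ)) * Complex.exp (Complex.I * x ^ 2 / (4 * t))

/-!
By Cauchy–Schwarz applied to `f y - f x = ∫ t in x..y, f' t`, an `H¹` function on the line is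
`1/2`-Hölder with constant `‖f'‖₂`; averaging this over a unit interval bounds it uniformly by
`‖f‖₂ + ‖f'‖₂`. As `s ↦ s ^ p` (`p ≥ 1`) is Lipschitz on bounded intervals, `g = |f| ^ (2μ+2)` is
again `1/2`-Hölder, with a constant `L` depending only on `μ` and `M`. Integrating
`|g (y₀ + ε x) - g y₀| ≤ L √ε √|x|` against `|V|` gives the bound `L √ε ∫ √|x| |V x|`.
-/

open scoped ENNReal

theorem MeasureTheory.MemLp.setIntegral_norm_le_mul_sqrt {α E : Type*} [MeasurableSpace α]
    {μ : Measure α} [NormedAddCommGroup E] {g : α → E} (hg : MemLp g 2 μ) {s : Set α}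
    (hs : μ s ≠ ∞) :
    ∫ t in s, ‖g t‖ ∂μ ≤ (eLpNorm g 2 μ).toReal * √(μ.real s) := by
  have hL1_le : eLpNorm g 1 (μ.restrict s) ≤ eLpNorm g 2 μ * μ s ^ (1 / 2 : ℝ) :=
    calc eLpNorm g 1 (μ.restrict s)
        ≤ eLpNorm g 2 (μ.restrict s) *
            μ.restrict s Set.univ ^ (1 / (1 : ℝ≥0∞).toReal - 1 / (2 : ℝ≥0∞).toReal) :=
          eLpNorm_le_eLpNorm_mul_rpow_measure_univ (by norm_num) hg.1.restrict
      _ = eLpNorm g 2 (μ.restrict s) * μ s ^ (1 / 2 : ℝ) := by norm_num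
      _ ≤ eLpNorm g 2 μ * μ s ^ (1 / 2 : ℝ) := by gcongr; exact Measure.restrict_le_self
  have hfin : eLpNorm g 2 μ * μ s ^ (1 / 2 : ℝ) ≠ ∞ :=
    ENNReal.mul_ne_top hg.2.ne (ENNReal.rpow_ne_top_of_nonneg (by norm_num) hs)
  rw [integral_norm_eq_lintegral_enorm hg.1.restrict, ← eLpNorm_one_eq_lintegral_enorm,
    Real.sqrt_eq_rpow, measureReal_def, ENNReal.toReal_rpow, ← ENNReal.toReal_mul]
  exact ENNReal.toReal_mono hfin hL1_le

theorem Real.abs_rpow_sub_rpow_le {p B s t : ℝ} (hp : 1 ≤ p) (hs : s ∈ Set.Icc 0 B)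
    (ht : t ∈ Set.Icc 0 B) : |s ^ p - t ^ p| ≤ p * B ^ (p - 1) * |s - t| := by
  have hderiv : ∀ u ∈ Set.Icc 0 B, HasDerivWithinAt (· ^ p) (p * u ^ (p - 1)) (Set.Icc 0 B) u :=
    fun u _ => (Real.hasDerivAt_rpow_const (Or.inr hp)).hasDerivWithinAt
  have hbound : ∀ u ∈ Set.Icc 0 B, ‖p * u ^ (p - 1)‖ ≤ p * B ^ (p - 1) := fun u hu => by
    rw [Real.norm_of_nonneg (by have := hu.1; positivity)]
    gcongr <;> linarith [hu.1, hu.2]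
  exact (convex_Icc 0 B).norm_image_sub_le_of_norm_hasDerivWithin_le hderiv hbound ht hs

theorem continuous_of_abs_sub_le_mul_sqrt {g : ℝ → ℝ} {L : ℝ}
    (hg : ∀ x y, |g x - g y| ≤ L * √|x - y|) : Continuous g := by
  refine continuous_iff_continuousAt.2 fun y => ?_
  have hlim : Filter.Tendsto (fun x => L * √|x - y|) (nhds y) (nhds 0) :=
    Continuous.tendsto' (by fun_prop) y 0 (by simp)
  exact tendsto_iff_norm_sub_tendsto_zero.2
    (squeeze_zero (fun _ => norm_nonneg _) (fun x => hg x y) hlim)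

theorem abs_integral_mul_comp_sub_le {V g : ℝ → ℝ} {L : ℝ}
    (hg : ∀ x y, |g x - g y| ≤ L * √|x - y|) (hV : Integrable V)
    (hVs : Integrable fun x => √|x| * |V x|) {ε : ℝ} (hε : 0 ≤ ε) (y₀ : ℝ) :
    |(∫ x, V x * g (y₀ + ε * x)) - (∫ x, V x) * g y₀| ≤ L * √ε * ∫ x, √|x| * |V x| := by
  have hpt : ∀ x, |V x * (g (y₀ + ε * x) - g y₀)| ≤ L * √ε * (√|x| * |V x|) := fun x => by
    have hgx := hg (y₀ + ε * x) y₀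
    rw [add_sub_cancel_left, abs_mul, abs_of_nonneg hε, Real.sqrt_mul hε] at hgx
    calc |V x * (g (y₀ + ε * x) - g y₀)| ≤ |V x| * (L * (√ε * √|x|)) := by
          rw [abs_mul]; gcongr
      _ = L * √ε * (√|x| * |V x|) := by ring
  have hcont := continuous_of_abs_sub_le_mul_sqrt hg
  have hdiff : Integrable fun x => V x * (g (y₀ + ε * x) - g y₀) :=
    (hVs.const_mul (L * √ε)).mono'
      (hV.1.mul (by fun_prop : Continuous fun x => g (y₀ + ε * x) - g y₀).aestronglyMeasurable)
      (Filter.Eventually.of_forall hpt)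
  have hsplit : (∫ x, V x * g (y₀ + ε * x)) - (∫ x, V x) * g y₀
      = ∫ x, V x * (g (y₀ + ε * x) - g y₀) := by
    have hconst : Integrable fun x => V x * g y₀ := hV.mul_const _
    have hshift : Integrable fun x => V x * g (y₀ + ε * x) :=
      (hdiff.add hconst).congr <| Filter.Eventually.of_forall fun x => by
        simp only [Pi.add_apply]; ring
    rw [← integral_mul_const, ← integral_sub hshift hconst]
    simp only [mul_sub]
  rw [hsplit, ← integral_const_mul]
  exact abs_integral_le_integral_abs.trans (integral_mono hdiff.abs (hVs.const_mul _) hpt)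

theorem integrable_sqrt_abs_mul_abs {V : ℝ → ℝ} (hV : Integrable V)
    (hV1 : Integrable fun x => (1 + |x|) * |V x|) : Integrable fun x => √|x| * |V x| := by
  refine hV1.mono' ((by fun_prop : Continuous fun x : ℝ => √|x|).aestronglyMeasurable.mul
    hV.abs.1) (Filter.Eventually.of_forall fun x => ?_)
  have hsqrt : √|x| ≤ 1 + |x| :=
    Real.sqrt_le_iff.2 ⟨by positivity, by nlinarith [abs_nonneg x]⟩
  rw [Real.norm_of_nonneg (by positivity)]
  gcongr

theorem L2norm_nonneg (g : ℝ → ℂ) : 0 ≤ L2norm g := ENNReal.toReal_nonneg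

theorem L2norm_le_H1norm_left (f g : ℝ → ℂ) : L2norm f ≤ H1norm f g :=
  Real.le_sqrt_of_sq_le (le_add_of_nonneg_right (sq_nonneg _))

theorem L2norm_le_H1norm_right (f g : ℝ → ℂ) : L2norm g ≤ H1norm f g :=
  Real.le_sqrt_of_sq_le (le_add_of_nonneg_left (sq_nonneg _))

theorem abs_intervalIntegral_norm_le_L2norm_mul_sqrt {g : ℝ → ℂ} (hg : MemLp g 2 volume)
    (a b : ℝ) : |∫ t in a..b, ‖g t‖| ≤ L2norm g * √|b - a| := by
  rw [intervalIntegral.abs_integral_eq_abs_integral_uIoc,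
    abs_of_nonneg (integral_nonneg fun _ => norm_nonneg _)]
  simpa [L2norm, measureReal_def, Real.volume_uIoc] using
    hg.setIntegral_norm_le_mul_sqrt (s := Set.uIoc a b) (by simp [Real.volume_uIoc])

namespace IsH1

variable {f g : ℝ → ℂ}

theorem norm_sub_le (h : IsH1 f g) (x y : ℝ) : ‖f y - f x‖ ≤ L2norm g * √|y - x| := by
  rw [h.2.2 x y]
  exact intervalIntegral.norm_integral_le_abs_integral_norm.trans
    (abs_intervalIntegral_norm_le_L2norm_mul_sqrt h.2.1 x y)

theorem norm_le (h : IsH1 f g) (x : ℝ) : ‖f x‖ ≤ L2norm f + L2norm g := by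
  have hf : IntervalIntegrable (fun y => ‖f y‖) volume x (x + 1) :=
    ((h.1.locallyIntegrable one_le_two).integrableOn_isCompact isCompact_uIcc)
      |>.intervalIntegrable.norm
  have hnear : ∀ y ∈ Set.Icc x (x + 1), ‖f x‖ ≤ ‖f y‖ + L2norm g := fun y hy => by
    have hdist : √|x - y| ≤ 1 := by
      rw [Real.sqrt_le_one, abs_le]
      constructor <;> linarith [hy.1, hy.2]
    have hholder := h.norm_sub_le y x
    have htri := norm_le_norm_add_norm_sub' (f x) (f y)
    nlinarith [L2norm_nonneg g]
  calc ‖f x‖ = ∫ _ in x..x + 1, ‖f x‖ := by simp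
    _ ≤ ∫ y in x..x + 1, (‖f y‖ + L2norm g) :=
        intervalIntegral.integral_mono_on (by linarith) intervalIntegrable_const
          (hf.add intervalIntegrable_const) hnear
    _ = (∫ y in x..x + 1, ‖f y‖) + L2norm g := by simp [intervalIntegral.integral_add hf]
    _ ≤ L2norm f + L2norm g := by
        gcongr
        simpa using (le_abs_self _).trans
          (abs_intervalIntegral_norm_le_L2norm_mul_sqrt h.1 x (x + 1))

theorem abs_norm_rpow_sub_le (h : IsH1 f g) {p M : ℝ} (hp : 1 ≤ p) (hM : H1norm f g ≤ M)
    (x y : ℝ) : |‖f x‖ ^ p - ‖f y‖ ^ p| ≤ p * (2 * M) ^ (p - 1) * M * √|x - y| := by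
  have hM0 : 0 ≤ M := (Real.sqrt_nonneg _).trans hM
  have hbdd : ∀ z, ‖f z‖ ∈ Set.Icc 0 (2 * M) := fun z =>
    ⟨norm_nonneg _, (h.norm_le z).trans
      (by linarith [L2norm_le_H1norm_left f g, L2norm_le_H1norm_right f g])⟩
  have hlip : 0 ≤ p * (2 * M) ^ (p - 1) := by
    have := Real.rpow_nonneg (by linarith : 0 ≤ 2 * M) (p - 1)
    positivity
  calc |‖f x‖ ^ p - ‖f y‖ ^ p| ≤ p * (2 * M) ^ (p - 1) * |‖f x‖ - ‖f y‖| :=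
        Real.abs_rpow_sub_rpow_le hp (hbdd x) (hbdd y)
    _ ≤ p * (2 * M) ^ (p - 1) * (M * √|x - y|) := by
        gcongr
        calc |‖f x‖ - ‖f y‖| ≤ ‖f x - f y‖ := abs_norm_sub_norm_le _ _
          _ ≤ L2norm g * √|x - y| := h.norm_sub_le y x
          _ ≤ M * √|x - y| := by gcongr; exact (L2norm_le_H1norm_right f g).trans hM
    _ = p * (2 * M) ^ (p - 1) * M * √|x - y| := by ring

end IsH1

theorem scaled_power_average_estimate_general (μ M J : ℝ) (hμ : 0 ≤ μ) :
    ∃ c : ℝ, 0 < c ∧ ∀ (V : ℝ → ℝ) (f f' : ℝ → ℂ),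
      Integrable V → Integrable (fun x => (1 + |x|) * |V x|) →
      (∫ x, Real.sqrt |x| * |V x|) = J →
      IsH1 f f' → H1norm f f' ≤ M →
      ∀ ε ∈ Set.Ioc (0 : ℝ) 1, ∀ y₀ : ℝ,
        |(∫ x, V x * ‖f (y₀ + ε * x)‖ ^ (2 * μ + 2)) - (∫ x, V x) * ‖f y₀‖ ^ (2 * μ + 2)|
          ≤ c * Real.sqrt ε := by
  set L := (2 * μ + 2) * (2 * M) ^ (2 * μ + 2 - 1) * M
  refine ⟨|L * J| + 1, by positivity, ?_⟩
  rintro V f f' hV hV1 hJ hf hfM ε ⟨hε, -⟩ y₀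
  have hp : 1 ≤ 2 * μ + 2 := by linarith
  calc _ ≤ L * √ε * J := hJ ▸
        abs_integral_mul_comp_sub_le (fun x y => hf.abs_norm_rpow_sub_le hp hfM x y) hV
          (integrable_sqrt_abs_mul_abs hV hV1) hε.le y₀
    _ ≤ (|L * J| + 1) * √ε := by nlinarith [le_abs_self (L * J), Real.sqrt_nonneg ε]

/-- For μ ≥ 0, ‖f‖_{H¹} ≤ M and V ∈ L¹(ℝ,(1+|x|)dx), the scaled averages of
|f|^{2μ+2} against V converge at rate √ε to (∫V)|f(y₀)|^{2μ+2}, with constant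
depending only on μ, M and J = ∫√|x||V|. -/
theorem scaled_power_average_estimate (μ M J : ℝ) (hμ : 0 ≤ μ) (hM : 0 < M) :
    ∃ c : ℝ, 0 < c ∧ ∀ (V : ℝ → ℝ) (f f' : ℝ → ℂ),
      Integrable V → Integrable (fun x => (1 + |x|) * |V x|) →
      (∫ x, Real.sqrt |x| * |V x|) = J →
      IsH1 f f' → H1norm f f' ≤ M →
      ∀ ε ∈ Set.Ioc (0 : ℝ) 1, ∀ y₀ : ℝ,
        |(∫ x, V x * ‖f (y₀ + ε * x)‖ ^ (2 * μ + 2)) - (∫ x, V x) * ‖f y₀‖ ^ (2 * μ + 2)|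
          ≤ c * Real.sqrt ε :=
  scaled_power_average_estimate_general μ M J hμ
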